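/- arXiv:2301.12733 — 2 statements merged into one kernel-verified Lean document; each statement's English description precedes it below -/
import Mathlib

section
/- For every k ≥ 1, the Ramsey problem for k-colorings of singletons RT¹_k is Weihrauch equivalent to the Bolzano–Weierstrass problem BWT_k. -/
open Classical

/-- A Turing functional, presented by a monotone computable map on finite prefixes
of the oracle. -/
structure Functional where
  eval : List ℕ → ℕ → Option ℕ
  mono : ∀ σ τ x y, σ <+: τ → eval σ x = some y → eval τ x = some y
  comp : Computable₂ eval

/-- The finite initial segment of `f` of length `k`. -/
def initSeg (f : ℕ → ℕ) (k : ℕ) : List ℕ := (List.range k).map f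

/-- `Φ(f)(x)` converges with value `y`. -/
def Functional.conv (Φ : Functional) (f : ℕ → ℕ) (x y : ℕ) : Prop :=
  ∃ k, Φ.eval (initSeg f k) x = some y

/-- Total application: `Φ(f) = g`. -/
def Functional.Total (Φ : Functional) (f g : ℕ → ℕ) : Prop :=
  ∀ x, Φ.conv f x (g x)

/-- The Turing join of two elements of Baire space. -/
def join (f g : ℕ → ℕ) : ℕ → ℕ := fun n => if n % 2 = 0 then f (n / 2) else g (n / 2)

/-- The embedding of `ℕ` into Baire space: `n` is identified with `n,0,0,0,…`. -/
def natSeq (n : ℕ) : ℕ → ℕ := fun i => if i = 0 then n else 0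

/-- A problem: a partial multifunction on Baire space, given by its domain
(the set of instances) and, for each instance, its set of solutions. -/
structure Problem where
  dom : Set (ℕ → ℕ)
  sol : (ℕ → ℕ) → Set (ℕ → ℕ)

/-- Weihrauch reducibility `Q ≤_W P`. -/
def WRed (Q P : Problem) : Prop :=
  ∃ Φ Ψ : Functional, ∀ f ∈ Q.dom, ∃ h, Φ.Total f h ∧ h ∈ P.dom ∧
    ∀ g ∈ P.sol h, ∃ y, Ψ.Total (join f g) y ∧ y ∈ Q.sol f

/-- Strong Weihrauch reducibility `Q ≤_sW P`: the backward functional only sees the solution. -/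
def SRed (Q P : Problem) : Prop :=
  ∃ Φ Ψ : Functional, ∀ f ∈ Q.dom, ∃ h, Φ.Total f h ∧ h ∈ P.dom ∧
    ∀ g ∈ P.sol h, ∃ y, Ψ.Total g y ∧ y ∈ Q.sol f

/-- Weihrauch equivalence. -/
def WEquiv (Q P : Problem) : Prop := WRed Q P ∧ WRed P Q

/-- Strong Weihrauch equivalence. -/
def SEquiv (Q P : Problem) : Prop := SRed Q P ∧ SRed P Q

/-- A problem is first-order if all its solutions are natural numbers
(under the identification of `n` with `natSeq n`). -/
def FirstOrder (P : Problem) : Prop :=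
  ∀ f ∈ P.dom, ∀ g ∈ P.sol f, ∃ n, g = natSeq n

/-- The code of a functional as an element of Baire space (the graph of its
prefix-evaluation function). -/
def Functional.graph (Φ : Functional) : ℕ → ℕ :=
  fun n => Encodable.encode (Φ.eval (Denumerable.ofNat (List ℕ) n.unpair.1) n.unpair.2)

/-- The first-order part `¹P` of a problem `P`: instances are (codes of) triples
`⟨f,Φ,Ψ⟩` with `Φ(f) ∈ dom(P)` and `Ψ(f,g)(0)↓` for all `g ∈ P(Φ(f))`; the
solutions are all values `Ψ(f,g)(0)` for `g ∈ P(Φ(f))`. -/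
def FOPart (P : Problem) : Problem where
  dom := { h | ∃ (f : ℕ → ℕ) (Φ Ψ : Functional), h = join f (join Φ.graph Ψ.graph) ∧
    ∃ p, Φ.Total f p ∧ p ∈ P.dom ∧ ∀ g ∈ P.sol p, ∃ y, Ψ.conv (join f g) 0 y }
  sol h := { w | ∃ (f : ℕ → ℕ) (Φ Ψ : Functional) (p g : ℕ → ℕ) (y : ℕ),
    h = join f (join Φ.graph Ψ.graph) ∧ Φ.Total f p ∧ p ∈ P.dom ∧ g ∈ P.sol p ∧
    Ψ.conv (join f g) 0 y ∧ w = natSeq y }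

/-- `P` is computably true: every instance computes one of its solutions. -/
def ComputablyTrue (P : Problem) : Prop :=
  ∀ f ∈ P.dom, ∃ g ∈ P.sol f, ∃ Φ : Functional, Φ.Total f g

/-- `P` is uniformly computably true: a single functional solves every instance. -/
def UnifCompTrue (P : Problem) : Prop :=
  ∃ Φ : Functional, ∀ f ∈ P.dom, ∃ g, Φ.Total f g ∧ g ∈ P.sol f

/-- `σ` is a finite initial segment of some `P`-solution to `f`. -/
def Extendible (P : Problem) (f : ℕ → ℕ) (σ : List ℕ) : Prop :=
  ∃ g ∈ P.sol f, σ = initSeg g σ.length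

/-- `P` is undiagonalizable: the set of strings extendible to a solution is
uniformly decidable from the instance. -/
def Undiag (P : Problem) : Prop :=
  ∃ Γ : Functional, ∀ f ∈ P.dom, ∀ σ : List ℕ,
    (Extendible P f σ → Γ.conv f (Encodable.encode σ) 1) ∧
    (¬ Extendible P f σ → Γ.conv f (Encodable.encode σ) 0)

/-- `RT¹_k`: instances are colorings `c : ℕ → k`; solutions are (characteristic
functions of) infinite sets on which `c` is constant. -/
def RT1 (k : ℕ) : Problem where
  dom := { c | ∀ x, c x < k }
  sol c := { h | (∀ x, h x ≤ 1) ∧ {x | h x = 1}.Infinite ∧ ∃ i, ∀ x, h x = 1 → c x = i }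

/-- `BWT_k`: instances are colorings `c : ℕ → k`; solutions are the colors
attained infinitely often. -/
def BWT (k : ℕ) : Problem where
  dom := { c | ∀ x, c x < k }
  sol c := { w | ∃ i, i < k ∧ {x | c x = i}.Infinite ∧ w = natSeq i }

/-
Both reductions keep the colouring as the instance; all the work is in the backward functional.
From a colour `i` that occurs infinitely often, the indicator function of `c⁻¹{i}` is an infinite
homogeneous set. Conversely, an infinite homogeneous set `H` is nonempty, and the colour of its
least element occurs infinitely often. That element is found by searching the pairs `(c j, H j)`
that a finite prefix of the oracle `join c H` determines.
-/

theorem List.IsPrefix.getElem?_eq_some {α : Type*} {l l' : List α} (h : l <+: l') {i : ℕ} {a : α}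
    (hi : l[i]? = some a) : l'[i]? = some a := by
  obtain ⟨hlt, rfl⟩ := List.getElem?_eq_some_iff.mp hi
  exact List.prefix_iff_getElem?.mp h i hlt

lemma initSeg_getElem? (f : ℕ → ℕ) {i n : ℕ} (h : i < n) : (initSeg f n)[i]? = some (f i) := by
  simp [initSeg, h]

lemma join_two_mul (f g : ℕ → ℕ) (n : ℕ) : join f g (2 * n) = f n := by
  simp [join]

lemma join_two_mul_add_one (f g : ℕ → ℕ) (n : ℕ) : join f g (2 * n + 1) = g n := by
  simp [join, Nat.add_mod, Nat.add_div]

/-- Decodes a finite prefix of `join f g` into the pairs `(f j, g j)` it determines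
(a trailing unpaired entry is dropped). -/
def unjoin (σ : List ℕ) : List (ℕ × ℕ) :=
  (List.range (σ.length / 2)).map fun j => (σ.getD (2 * j) 0, σ.getD (2 * j + 1) 0)

lemma unjoin_prefix {σ τ : List ℕ} (h : σ <+: τ) : unjoin σ <+: unjoin τ := by
  have hlen := h.length_le
  have getD_eq : ∀ i < σ.length, τ.getD i 0 = σ.getD i 0 := fun i hi => by
    simp only [List.getD_eq_getElem?_getD, h.getElem?_eq_some (List.getElem?_eq_getElem hi),
      List.getElem?_eq_getElem hi]
  rw [List.prefix_iff_getElem?]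
  intro j hj
  simp only [unjoin, List.length_map, List.length_range] at hj
  simp only [unjoin, List.getElem?_map, List.getElem_map, List.getElem_range,
    List.getElem?_range (show j < τ.length / 2 by omega), getD_eq (2 * j) (by omega),
    getD_eq (2 * j + 1) (by omega), Option.map_some]

lemma unjoin_initSeg_join (f g : ℕ → ℕ) (n : ℕ) :
    unjoin (initSeg (join f g) (2 * n)) = (List.range n).map fun j => (f j, g j) := by
  have hlen : (initSeg (join f g) (2 * n)).length = 2 * n := by simp [initSeg]
  refine List.ext_getElem (by simp [unjoin, hlen]) fun j hj _ => ?_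
  simp only [unjoin, hlen, List.length_map, List.length_range] at hj
  simp [unjoin, initSeg, List.getD_eq_getElem?_getD, join_two_mul,
    join_two_mul_add_one, show 2 * j < 2 * n by omega, show 2 * j + 1 < 2 * n by omega]

lemma primrec_unjoin : Primrec unjoin := by
  have even : Primrec₂ fun (_ : List ℕ) (j : ℕ) => 2 * j :=
    Primrec.nat_mul.comp (Primrec.const 2) Primrec.snd
  have odd : Primrec₂ fun (_ : List ℕ) (j : ℕ) => 2 * j + 1 := Primrec.succ.comp even
  have entry {e : List ℕ → ℕ → ℕ} (he : Primrec₂ e) :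
      Primrec₂ fun (σ : List ℕ) (j : ℕ) => σ.getD (e σ j) 0 :=
    (Primrec.list_getD 0).comp Primrec.fst he
  exact Primrec.list_map
    (Primrec.list_range.comp (Primrec.nat_div.comp Primrec.list_length (Primrec.const 2)))
    (Primrec.pair (entry even) (entry odd))

namespace Functional

protected def id : Functional where
  eval σ x := σ[x]?
  mono _ _ _ _ h := h.getElem?_eq_some
  comp := Primrec.list_getElem?.to_comp

lemma total_id (f : ℕ → ℕ) : Functional.id.Total f f :=
  fun x => ⟨x + 1, initSeg_getElem? f (Nat.lt_succ_self x)⟩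

def ofUnjoin (F : List (ℕ × ℕ) → ℕ → Option ℕ)
    (mono : ∀ l l' x y, l <+: l' → F l x = some y → F l' x = some y) (comp : Computable₂ F) :
    Functional where
  eval σ x := F (unjoin σ) x
  mono _ _ x y h := mono _ _ x y (unjoin_prefix h)
  comp := comp.comp (primrec_unjoin.to_comp.comp Computable.fst) Computable.snd

lemma conv_ofUnjoin {F : List (ℕ × ℕ) → ℕ → Option ℕ}
    {mono : ∀ l l' x y, l <+: l' → F l x = some y → F l' x = some y} {comp : Computable₂ F}
    {f g : ℕ → ℕ} {x y : ℕ} (n : ℕ) (h : F ((List.range n).map fun j => (f j, g j)) x = some y) :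
    (ofUnjoin F mono comp).conv (join f g) x y :=
  ⟨2 * n, show F (unjoin _) x = some y by rwa [unjoin_initSeg_join]⟩

end Functional

def preimageIndicator : Functional :=
  -- on the oracle `join c (natSeq i)`, the colour `i` sits in the second component of pair `0`
  .ofUnjoin (fun l x => l[x]?.bind fun p => l[0]?.map fun q => if p.1 = q.2 then 1 else 0)
    (fun l l' x y hl h => by
      simp only [Option.bind_eq_some_iff, Option.map_eq_some_iff] at h ⊢
      obtain ⟨p, hp, q, hq, rfl⟩ := h
      exact ⟨p, hl.getElem?_eq_some hp, q, hl.getElem?_eq_some hq, rfl⟩)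
    (by
      refine Primrec₂.to_comp (Primrec.option_bind Primrec.list_getElem? ?_)
      refine Primrec.option_map
        (Primrec.list_getElem?.comp (Primrec.fst.comp Primrec.fst) (Primrec.const 0)) ?_
      exact Primrec.ite (Primrec.eq.comp (Primrec.fst.comp (Primrec.snd.comp Primrec.fst))
        (Primrec.snd.comp Primrec.snd)) (Primrec.const 1) (Primrec.const 0))

def colorAtFirstMember : Functional :=
  .ofUnjoin (fun l x => if x = 0 then (l.find? fun p => p.2 == 1).map Prod.fst else some 0)
    (fun l l' x y hl h => by
      split_ifs at h ⊢
      · obtain ⟨p, hp, rfl⟩ := Option.map_eq_some_iff.mp h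
        exact Option.map_eq_some_iff.mpr ⟨p, hl.find?_eq_some hp, rfl⟩
      · exact h)
    (by
      have firstMember : Primrec fun l : List (ℕ × ℕ) => l.find? fun p => p.2 == 1 := by
        simp only [List.find?_eq_getElem?_findIdx]
        exact Primrec.list_getElem?.comp Primrec.id (Primrec.list_findIdx Primrec.id
          (Primrec.beq.comp (Primrec.snd.comp Primrec.snd) (Primrec.const 1)))
      exact Primrec₂.to_comp (Primrec.ite (Primrec.eq.comp Primrec.snd (Primrec.const 0))
        (Primrec.option_map (firstMember.comp Primrec.fst) (Primrec.fst.comp Primrec.snd))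
        (Primrec.const (some 0))))

lemma preimageIndicator_total (c : ℕ → ℕ) (i : ℕ) :
    preimageIndicator.Total (join c (natSeq i)) fun x => if c x = i then 1 else 0 :=
  fun x => Functional.conv_ofUnjoin (x + 1) (by simp [natSeq])

lemma colorAtFirstMember_total (c h : ℕ → ℕ) {x : ℕ} (hx : h x = 1) (hmin : ∀ y < x, h y ≠ 1) :
    colorAtFirstMember.Total (join c h) (natSeq (c x)) := by
  have first : ((List.range (x + 1)).map fun j => (c j, h j)).find? (·.2 == 1) = some (c x, 1) := by
    rw [List.find?_map, Option.map_eq_some_iff]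
    refine ⟨x, List.find?_range_eq_some.mpr ⟨by simpa using hx, by simp, fun j hj => ?_⟩,
      by simp [hx]⟩
    simpa using hmin j hj
  intro n
  refine Functional.conv_ofUnjoin (x + 1) ?_
  by_cases hn : n = 0 <;> simp [hn, first, natSeq]

lemma indicator_mem_RT1_sol {k : ℕ} {c : ℕ → ℕ} {i : ℕ} (hinf : {x | c x = i}.Infinite) :
    (fun x => if c x = i then 1 else 0) ∈ (RT1 k).sol c := by
  refine ⟨fun _ => ite_le_one le_rfl zero_le_one, by simpa using hinf, i, fun x hx => ?_⟩
  by_contra hne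
  simp [hne] at hx

lemma natSeq_color_mem_BWT_sol {k : ℕ} {c h : ℕ → ℕ} (hc : c ∈ (BWT k).dom)
    (hh : h ∈ (RT1 k).sol c) {x : ℕ} (hx : h x = 1) : natSeq (c x) ∈ (BWT k).sol c := by
  obtain ⟨-, hinf, i, hi⟩ := hh
  refine ⟨c x, hc x, hinf.mono fun y hy => ?_, rfl⟩
  simp only [Set.mem_ofPred_eq, hi y hy, hi x hx]

lemma WRed.of_dom_subset {Q P : Problem} (hdom : Q.dom ⊆ P.dom) (Ψ : Functional)
    (hΨ : ∀ f ∈ Q.dom, ∀ g ∈ P.sol f, ∃ y, Ψ.Total (join f g) y ∧ y ∈ Q.sol f) : WRed Q P :=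
  ⟨.id, Ψ, fun f hf => ⟨f, Functional.total_id f, hdom hf, hΨ f hf⟩⟩

theorem RT1_wred_BWT (k : ℕ) : WRed (RT1 k) (BWT k) := by
  refine WRed.of_dom_subset subset_rfl preimageIndicator fun c _ g hg => ?_
  obtain ⟨i, -, hinf, rfl⟩ := hg
  exact ⟨_, preimageIndicator_total c i, indicator_mem_RT1_sol hinf⟩

theorem BWT_wred_RT1 (k : ℕ) : WRed (BWT k) (RT1 k) := by
  refine WRed.of_dom_subset subset_rfl colorAtFirstMember fun c hc h hh => ?_
  have hmem : ∃ x, h x = 1 := hh.2.1.nonempty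
  exact ⟨_, colorAtFirstMember_total c h (Nat.find_spec hmem) fun y => Nat.find_min hmem,
    natSeq_color_mem_BWT_sol hc hh (Nat.find_spec hmem)⟩

theorem RT1_wequiv_BWT_general (k : ℕ) : WEquiv (RT1 k) (BWT k) :=
  ⟨RT1_wred_BWT k, BWT_wred_RT1 k⟩

theorem RT1_wequiv_BWT (k : ℕ) (hk : 1 ≤ k) : WEquiv (RT1 k) (BWT k) :=
  RT1_wequiv_BWT_general k
end

section
/- For every k ≥ 2, the first-order part of BWT_k is not strongly Weihrauch reducible to BWT_k. -/
open Classical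

/-!
For each `m`, the instance of `¹P` whose backward functional is the constant `m` has `m` as its
only solution. A strong reduction of `¹BWT_k` to `BWT_k` must therefore produce `k + 1` distinct
outputs `m = 0, …, k` from the backward functional applied to the only `k` possible
`BWT_k`-solutions `0, …, k - 1`, which the pigeonhole principle forbids.
-/

lemma initSeg_prefix (f : ℕ → ℕ) {a b : ℕ} (h : a ≤ b) : initSeg f a <+: initSeg f b := by
  have : List.range a <+: List.range b := by
    rw [show List.range a = (List.range b).take a by simp [List.take_range, h]]
    exact List.take_prefix a (List.range b)
  exact this.map f

namespace Functional

def const (m : ℕ) : Functional where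
  eval _ _ := some m
  mono _ _ _ _ _ h := h
  comp := Computable.const (some m)

lemma conv_unique (Φ : Functional) {f : ℕ → ℕ} {x y y' : ℕ}
    (h : Φ.conv f x y) (h' : Φ.conv f x y') : y = y' := by
  obtain ⟨a, ha⟩ := h
  obtain ⟨b, hb⟩ := h'
  rcases le_total a b with hab | hab
  · rw [Φ.mono _ _ x y (initSeg_prefix f hab) ha] at hb
    exact Option.some_injective _ hb
  · rw [Φ.mono _ _ x y' (initSeg_prefix f hab) hb] at ha
    exact (Option.some_injective _ ha).symm

lemma total_unique (Φ : Functional) {f y y' : ℕ → ℕ}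
    (h : Φ.Total f y) (h' : Φ.Total f y') : y = y' :=
  funext fun x => Φ.conv_unique (h x) (h' x)

lemma graph_injective : Function.Injective Functional.graph := by
  rintro ⟨Φ, _, _⟩ ⟨Ψ, _, _⟩ h
  suffices Φ = Ψ by subst this; rfl
  funext σ x
  have := congrFun h (Nat.pair (Encodable.encode σ) x)
  simp only [Functional.graph, Nat.unpair_pair, Denumerable.ofNat_encode] at this
  exact Encodable.encode_injective this

end Functional

lemma join_eq_join_iff {f g f' g' : ℕ → ℕ} : join f g = join f' g' ↔ f = f' ∧ g = g' := by
  refine ⟨fun h => ⟨funext fun n => ?_, funext fun n => ?_⟩, fun ⟨hf, hg⟩ => hf ▸ hg ▸ rfl⟩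
  · simpa [join] using congrFun h (2 * n)
  · simpa [join, Nat.add_mod, Nat.add_div] using congrFun h (2 * n + 1)

lemma natSeq_injective : Function.Injective natSeq := fun a b h => by
  simpa [natSeq] using congrFun h 0

def FOPart.constInst (m : ℕ) : ℕ → ℕ :=
  join (fun _ => 0) (join (Functional.const 0).graph (Functional.const m).graph)

lemma FOPart.constInst_mem_dom {P : Problem} (hP : (fun _ => 0) ∈ P.dom) (m : ℕ) :
    FOPart.constInst m ∈ (FOPart P).dom :=
  ⟨_, _, Functional.const m, rfl, fun _ => 0, fun _ => ⟨0, rfl⟩, hP, fun _ _ => ⟨m, 0, rfl⟩⟩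

lemma FOPart.sol_constInst {P : Problem} {m : ℕ} {w : ℕ → ℕ}
    (hw : w ∈ (FOPart P).sol (FOPart.constInst m)) : w = natSeq m := by
  obtain ⟨f, Φ, Ψ, p, g, y, heq, -, -, -, ⟨n, hy⟩, rfl⟩ := hw
  obtain ⟨-, -, hΨ⟩ := by simpa only [FOPart.constInst, join_eq_join_iff] using heq
  cases Functional.graph_injective hΨ
  cases Option.some_injective _ hy
  rfl

lemma BWT.exists_sol {k : ℕ} {c : ℕ → ℕ} (hc : c ∈ (BWT k).dom) :
    ∃ i < k, natSeq i ∈ (BWT k).sol c := by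
  obtain ⟨⟨i, hi⟩, hinf⟩ := Finite.exists_infinite_fiber fun x => (⟨c x, hc x⟩ : Fin k)
  refine ⟨i, hi, i, hi, ?_, rfl⟩
  simpa [Set.infinite_coe_iff, Set.preimage, Fin.ext_iff] using hinf

theorem not_SRed_of_forced_sols {Q P : Problem} {k : ℕ}
    (hP : ∀ p ∈ P.dom, ∃ i < k, natSeq i ∈ P.sol p)
    (hQ : ∀ m ≤ k, ∃ f ∈ Q.dom, ∀ w ∈ Q.sol f, w = natSeq m) : ¬ SRed Q P := by
  rintro ⟨Φ, Ψ, hred⟩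
  have hback : ∀ m : Fin (k + 1), ∃ i : Fin k, Ψ.Total (natSeq i) (natSeq m) := by
    intro m
    obtain ⟨f, hf, hforced⟩ := hQ m (Nat.lt_succ_iff.mp m.isLt)
    obtain ⟨p, -, hp, hsol⟩ := hred f hf
    obtain ⟨i, hi, hip⟩ := hP p hp
    obtain ⟨y, hy, hyf⟩ := hsol _ hip
    exact ⟨⟨i, hi⟩, hforced y hyf ▸ hy⟩
  choose F hF using hback
  obtain ⟨m, m', hne, hFm⟩ := Fintype.exists_ne_map_eq_of_card_lt F (by simp)
  have := Ψ.total_unique (hF m) (hFm ▸ hF m')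
  exact hne (Fin.ext (natSeq_injective this))

theorem FOPart_BWT_not_SRed_BWT (k : ℕ) (hk : 2 ≤ k) :
    ¬ SRed (FOPart (BWT k)) (BWT k) := by
  have hpos : 0 < k := by omega
  have hzero : (fun _ => 0) ∈ (BWT k).dom := fun _ => hpos
  refine not_SRed_of_forced_sols (fun _ => BWT.exists_sol) fun m _ => ?_
  exact ⟨_, FOPart.constInst_mem_dom hzero m, fun _ => FOPart.sol_constInst⟩
end
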